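/- arXiv:1409.1194 — 5 statements merged into one kernel-verified Lean document; each statement's English description precedes it below -/
import Mathlib

section
/- Let G be a graph on n vertices that contains no independent set of size p (p ≥ 2). Then the number of edges of G is more than n²/(2p) - n/2. Equivalently (complement form of Turán's theorem): if a graph on n vertices has no clique of size p, it has at most (1 - 1/(p-1))·n²/2 edges. -/
/-!
The complement `Gᶜ` has no `p`-clique, so by Turán's theorem it has at most
`(1 - 1/(p-1)) n²/2` edges. Since `G` and `Gᶜ` share the `n(n-1)/2` edges of the complete
graph, `G` has at least `n²/(2(p-1)) - n/2` edges, which exceeds `n²/(2p) - n/2` as `n > 0`.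
-/

open Finset

namespace SimpleGraph

variable {V : Type*} [Fintype V]

theorem card_edgeFinset_add_card_edgeFinset_compl [DecidableEq V] (G : SimpleGraph V)
    [DecidableRel G.Adj] :
    #G.edgeFinset + #Gᶜ.edgeFinset = (Fintype.card V).choose 2 := by
  rw [← card_edgeFinset_top_eq_card_choose_two, ← card_union_of_disjoint
    (disjoint_edgeFinset.2 disjoint_compl_right)]
  congr 1
  rw [← edgeFinset_sup]
  exact edgeFinset_inj.2 sup_compl_eq_top

theorem CliqueFree.mul_card_edgeFinset_le {G : SimpleGraph V} [DecidableRel G.Adj] {r : ℕ}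
    (cf : G.CliqueFree (r + 1)) :
    2 * r * #G.edgeFinset ≤ (r - 1) * Fintype.card V ^ 2 := by
  rcases r.eq_zero_or_pos with rfl | hr
  · simp
  obtain ⟨H, _, maxH⟩ := exists_isTuranMaximal (V := V) hr
  calc 2 * r * #G.edgeFinset
      ≤ 2 * r * #H.edgeFinset := Nat.mul_le_mul_left _ (maxH.2 cf)
    _ = 2 * r * #(turanGraph (Fintype.card V) r).edgeFinset := by
      rw [((isTuranMaximal_iff_nonempty_iso_turanGraph hr).mp maxH).some.card_edgeFinset_eq]
    _ ≤ (r - 1) * Fintype.card V ^ 2 := mul_card_edgeFinset_turanGraph_le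

end SimpleGraph

/-- Turán's theorem in complement form: if a graph `G` on `n` vertices contains no
independent set of size `p` (with `p ≥ 2`), then `G` has more than
`n²/(2p) - n/2` edges. -/
theorem stmt_0 {V : Type*} [Fintype V] [DecidableEq V] [Nonempty V]
    (G : SimpleGraph V) [DecidableRel G.Adj] (p : ℕ) (hp : 2 ≤ p)
    (hindep : Gᶜ.CliqueFree p) :
    ((Fintype.card V : ℝ) ^ 2 / (2 * p) - (Fintype.card V : ℝ) / 2)
      < (G.edgeFinset.card : ℝ) := by
  obtain ⟨r, rfl⟩ : ∃ r, p = r + 1 := ⟨p - 1, by omega⟩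
  set n := Fintype.card V
  have hn : (0 : ℝ) < n := by exact_mod_cast Fintype.card_pos
  have hr : (1 : ℝ) ≤ r := by exact_mod_cast (by omega : 1 ≤ r)
  have hturan : 2 * r * (#Gᶜ.edgeFinset : ℝ) ≤ (r - 1) * n ^ 2 := by
    have := (Nat.cast_le (α := ℝ)).2 hindep.mul_card_edgeFinset_le
    push_cast [Nat.cast_sub (by omega : 1 ≤ r)] at this
    exact this
  have hsplit : (#G.edgeFinset : ℝ) + #Gᶜ.edgeFinset = n * (n - 1) / 2 := by
    rw [← Nat.cast_choose_two]
    exact_mod_cast G.card_edgeFinset_add_card_edgeFinset_compl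
  have hgap : (n : ℝ) ^ 2 / (2 * (r + 1)) < n ^ 2 / (2 * r) :=
    div_lt_div_of_pos_left (by positivity) (by positivity) (by linarith)
  have hlower : (n : ℝ) ^ 2 / (2 * r) - n / 2 ≤ #G.edgeFinset := by
    rw [div_sub' (by positivity), div_le_iff₀ (by positivity)]
    nlinarith
  push_cast
  linarith
end

section
/- Subject to the constraints β₁, β₂, β₃, β₄ ≥ α and β₁ + β₂ + β₃ + β₄ = 1, where 0 < α ≤ 1/4, the product 24·β₁β₂β₃β₄ attains its minimum at β₁ = β₂ = β₃ = α and β₄ = 1 − 3α; hence 24·β₁β₂β₃β₄ ≥ 24·α³(1−3α) for all feasible (β₁,β₂,β₃,β₄). -/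
/-!
Write `βᵢ = α + yᵢ` with `yᵢ ≥ 0`. Expanding `∏ (α + yᵢ)` gives only nonnegative terms, and
those of degree at most one in `y` already sum to `α⁴ + α³ ∑ yᵢ = α⁴ + α³ (1 - 4α) = α³ (1 - 3α)`.
-/

open Finset

theorem pow_card_add_pow_mul_sum_le_prod_add {ι R : Type*} [CommSemiring R] [PartialOrder R]
    [IsOrderedRing R] (s : Finset ι) {a : R} (ha : 0 ≤ a) {y : ι → R} (hy : ∀ i ∈ s, 0 ≤ y i) :
    a ^ #s + a ^ (#s - 1) * ∑ i ∈ s, y i ≤ ∏ i ∈ s, (a + y i) := by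
  classical
  induction s using Finset.induction_on with
  | empty => simp
  | @insert j t hj ih =>
    have hyt : ∀ i ∈ t, 0 ≤ y i := fun i hi => hy i (mem_insert_of_mem hi)
    have hyj : 0 ≤ y j := hy j (mem_insert_self j t)
    have hpow : a ^ #t ≤ ∏ i ∈ t, (a + y i) := by
      simpa using prod_le_prod (fun _ _ => ha) fun i hi => le_add_of_nonneg_right (hyt i hi)
    rw [card_insert_of_notMem hj, sum_insert hj, prod_insert hj, Nat.add_sub_cancel]
    calc a ^ (#t + 1) + a ^ #t * (y j + ∑ i ∈ t, y i)
        = a * (a ^ #t + a ^ (#t - 1) * ∑ i ∈ t, y i) + y j * a ^ #t := by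
          rcases t.eq_empty_or_nonempty with rfl | ht
          · simp [pow_succ, mul_comm]
          · obtain ⟨m, hm⟩ : ∃ m, #t = m + 1 := ⟨#t - 1, by have := ht.card_pos; omega⟩
            rw [hm, Nat.add_sub_cancel]; ring
      _ ≤ a * ∏ i ∈ t, (a + y i) + y j * ∏ i ∈ t, (a + y i) := by gcongr; exact ih hyt
      _ = (a + y j) * ∏ i ∈ t, (a + y i) := by ring

theorem stmt_4_general (α β₁ β₂ β₃ β₄ : ℝ) (hα : 0 < α)
    (h1 : α ≤ β₁) (h2 : α ≤ β₂) (h3 : α ≤ β₃) (h4 : α ≤ β₄)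
    (hsum : β₁ + β₂ + β₃ + β₄ = 1) :
    24 * (α ^ 3 * (1 - 3 * α)) ≤ 24 * (β₁ * β₂ * β₃ * β₄) := by
  have key := pow_card_add_pow_mul_sum_le_prod_add univ hα.le
    (y := ![β₁ - α, β₂ - α, β₃ - α, β₄ - α]) fun i _ => by fin_cases i <;> simp <;> linarith
  simp only [card_univ, Fintype.card_fin, Nat.succ_eq_add_one, Nat.reduceAdd,
    Nat.add_one_sub_one, Fin.sum_univ_four, Fin.prod_univ_four,
    Fin.isValue, Matrix.cons_val, Matrix.cons_val_zero, Matrix.cons_val_one, add_sub_cancel] at key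
  have hexcess : β₁ - α + (β₂ - α) + (β₃ - α) + (β₄ - α) = 1 - 4 * α := by linarith
  rw [hexcess] at key
  linarith

/-- Subject to `βᵢ ≥ α` and `β₁ + β₂ + β₃ + β₄ = 1` with `0 < α ≤ 1/4`, the product
`24·β₁β₂β₃β₄` is minimized at `β₁ = β₂ = β₃ = α`, `β₄ = 1 - 3α`; hence
`24·β₁β₂β₃β₄ ≥ 24·α³(1 - 3α)`. -/
theorem stmt_4 (α β₁ β₂ β₃ β₄ : ℝ) (hα : 0 < α) (hα4 : α ≤ 1 / 4)
    (h1 : α ≤ β₁) (h2 : α ≤ β₂) (h3 : α ≤ β₃) (h4 : α ≤ β₄)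
    (hsum : β₁ + β₂ + β₃ + β₄ = 1) :
    24 * (α ^ 3 * (1 - 3 * α)) ≤ 24 * (β₁ * β₂ * β₃ * β₄) :=
  stmt_4_general α β₁ β₂ β₃ β₄ hα h1 h2 h3 h4 hsum
end

section
/- Let X be the unit circle in ℝ², let y_a, y_b, y_c, y_d be four points of X in this circular order, and let z be the intersection point of segments [y_a, y_c] and [y_b, y_d]. Let S be a convex set containing points q₁, q₂, q₃, q₄ of X with q₁ in the arc from y_a to y_b, q₂ in the arc from y_b to y_c, q₃ in the arc from y_c to y_d, and q₄ in the arc from y_d to y_a. Then z ∈ S. -/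
/-!
The chords `y_a y_c` and `y_b y_d` cut the plane into four closed quadrants around `z`, and
`q₁, q₂, q₃, q₄` lie in the four different quadrants: for points of the circle, the sign of the
cross product `(y_β - y_α) × (y_φ - y_α)` is that of
`sin ((β - α)/2) sin ((φ - β)/2) sin ((φ - α)/2)`.
A convex set meeting all four quadrants contains `z`: the segments `[q₁, q₂]` and `[q₃, q₄]` meet
the line `y_b y_d` on opposite sides of the line `y_a y_c`, and the segment joining these two
points crosses `y_a y_c` at `z`.
-/

open Real

section Convex

variable {𝕜 E : Type*} [Field 𝕜] [LinearOrder 𝕜] [IsStrictOrderedRing 𝕜] [AddCommGroup E]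
  [Module 𝕜 E] {s : Set E}

theorem Convex.exists_mem_affineMap_eq (hs : Convex 𝕜 s) (f : E →ᵃ[𝕜] 𝕜) {x y : E} {r : 𝕜}
    (hx : x ∈ s) (hy : y ∈ s) (hfx : f x ≤ r) (hfy : r ≤ f y) : ∃ p ∈ s, f p = r := by
  have hr : r ∈ f '' segment 𝕜 x y := by
    rw [image_segment, segment_eq_Icc (hfx.trans hfy)]
    exact ⟨hfx, hfy⟩
  obtain ⟨p, hp, hfp⟩ := hr
  exact ⟨p, hs.segment_subset hx hy hp, hfp⟩

theorem Convex.exists_mem_common_zero (hs : Convex 𝕜 s) (f g : E →ᵃ[𝕜] 𝕜) {q₁ q₂ q₃ q₄ : E}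
    (h₁ : q₁ ∈ s) (h₂ : q₂ ∈ s) (h₃ : q₃ ∈ s) (h₄ : q₄ ∈ s)
    (hf₁ : f q₁ ≤ 0) (hf₂ : f q₂ ≤ 0) (hf₃ : 0 ≤ f q₃) (hf₄ : 0 ≤ f q₄)
    (hg₁ : 0 ≤ g q₁) (hg₂ : g q₂ ≤ 0) (hg₃ : g q₃ ≤ 0) (hg₄ : 0 ≤ g q₄) :
    ∃ w ∈ s, f w = 0 ∧ g w = 0 := by
  have hs_neg : Convex 𝕜 (s ∩ f ⁻¹' Set.Iic 0) := hs.inter ((convex_Iic 0).affine_preimage f)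
  have hs_pos : Convex 𝕜 (s ∩ f ⁻¹' Set.Ici 0) := hs.inter ((convex_Ici 0).affine_preimage f)
  have hs_zero : Convex 𝕜 (s ∩ g ⁻¹' {0}) := hs.inter ((convex_singleton 0).affine_preimage g)
  obtain ⟨p, ⟨hps, hfp⟩, hgp⟩ := hs_neg.exists_mem_affineMap_eq g ⟨h₂, hf₂⟩ ⟨h₁, hf₁⟩ hg₂ hg₁
  obtain ⟨p', ⟨hp's, hfp'⟩, hgp'⟩ := hs_pos.exists_mem_affineMap_eq g ⟨h₃, hf₃⟩ ⟨h₄, hf₄⟩ hg₃ hg₄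
  obtain ⟨w, ⟨hws, hgw⟩, hfw⟩ :=
    hs_zero.exists_mem_affineMap_eq f ⟨hps, hgp⟩ ⟨hp's, hgp'⟩ hfp hfp'
  exact ⟨w, hws, hfw, hgw⟩

end Convex

def lineSide (a b : ℝ × ℝ) : ℝ × ℝ →ᵃ[ℝ] ℝ where
  toFun p := (b.1 - a.1) * (p.2 - a.2) - (b.2 - a.2) * (p.1 - a.1)
  linear := (b.1 - a.1) • LinearMap.snd ℝ ℝ ℝ - (b.2 - a.2) • LinearMap.fst ℝ ℝ ℝ
  map_vadd' p v := by
    simp only [vadd_eq_add, Prod.fst_add, Prod.snd_add, LinearMap.sub_apply,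
      LinearMap.smul_apply, LinearMap.fst_apply, LinearMap.snd_apply, smul_eq_mul]
    ring

@[simp]
theorem lineSide_apply (a b p : ℝ × ℝ) :
    lineSide a b p = (b.1 - a.1) * (p.2 - a.2) - (b.2 - a.2) * (p.1 - a.1) := rfl

theorem lineSide_eq_zero_of_mem_segment {a b p : ℝ × ℝ} (hp : p ∈ segment ℝ a b) :
    lineSide a b p = 0 := by
  obtain ⟨s, t, -, -, hst, rfl⟩ := hp
  simp only [lineSide_apply, Prod.fst_add, Prod.snd_add, Prod.smul_fst, Prod.smul_snd,
    smul_eq_mul]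
  linear_combination (b.1 * a.2 - a.1 * b.2) * hst

theorem eq_of_lineSide_eq_zero {a b c d w z : ℝ × ℝ} (hbd : lineSide a c b ≠ lineSide a c d)
    (hw₁ : lineSide a c w = 0) (hz₁ : lineSide a c z = 0)
    (hw₂ : lineSide b d w = 0) (hz₂ : lineSide b d z = 0) : w = z := by
  simp only [lineSide_apply] at *
  set D := (c.1 - a.1) * (d.2 - b.2) - (c.2 - a.2) * (d.1 - b.1)
  have hdet : D ≠ 0 := fun h ↦ hbd (by linear_combination -h)
  have h₁ : D * (w.1 - z.1) = 0 := by
    linear_combination (d.1 - b.1) * (hw₁ - hz₁) - (c.1 - a.1) * (hw₂ - hz₂)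
  have h₂ : D * (w.2 - z.2) = 0 := by
    linear_combination (d.2 - b.2) * (hw₁ - hz₁) - (c.2 - a.2) * (hw₂ - hz₂)
  ext
  · exact sub_eq_zero.mp ((mul_eq_zero.mp h₁).resolve_left hdet)
  · exact sub_eq_zero.mp ((mul_eq_zero.mp h₂).resolve_left hdet)

noncomputable def circlePoint (θ : ℝ) : ℝ × ℝ := (cos θ, sin θ)

theorem circlePoint_add_two_pi (θ : ℝ) : circlePoint (θ + 2 * π) = circlePoint θ := by
  simp [circlePoint]

theorem sin_two_mul_add_sin_two_mul_sub_sin_two_mul_add (s t : ℝ) :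
    sin (2 * s) + sin (2 * t) - sin (2 * (s + t)) = 4 * sin s * sin t * sin (s + t) := by
  rw [sin_two_mul, sin_two_mul, sin_two_mul, sin_add, cos_add]
  linear_combination -(2 * sin s * cos s) * sin_sq_add_cos_sq t
    - (2 * sin t * cos t) * sin_sq_add_cos_sq s

theorem lineSide_circlePoint (α β φ : ℝ) :
    lineSide (circlePoint α) (circlePoint β) (circlePoint φ)
      = 4 * sin ((β - α) / 2) * sin ((φ - β) / 2) * sin ((φ - α) / 2) := by
  have h := sin_two_mul_add_sin_two_mul_sub_sin_two_mul_add ((β - α) / 2) ((φ - β) / 2)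
  rw [show 2 * ((β - α) / 2) = β - α by ring, show 2 * ((φ - β) / 2) = φ - β by ring,
    show 2 * ((β - α) / 2 + (φ - β) / 2) = φ - α by ring,
    show (β - α) / 2 + (φ - β) / 2 = (φ - α) / 2 by ring] at h
  rw [← h]
  simp only [lineSide_apply, circlePoint, sin_sub]
  ring

theorem lineSide_circlePoint_nonpos {α β φ : ℝ} (hαφ : α ≤ φ) (hφβ : φ ≤ β)
    (hβα : β ≤ α + 2 * π) : lineSide (circlePoint α) (circlePoint β) (circlePoint φ) ≤ 0 := by
  rw [lineSide_circlePoint]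
  have h₁ : 0 ≤ sin ((β - α) / 2) := sin_nonneg_of_nonneg_of_le_pi (by linarith) (by linarith)
  have h₂ : sin ((φ - β) / 2) ≤ 0 := sin_nonpos_of_nonpos_of_neg_pi_le (by linarith) (by linarith)
  have h₃ : 0 ≤ sin ((φ - α) / 2) := sin_nonneg_of_nonneg_of_le_pi (by linarith) (by linarith)
  exact mul_nonpos_of_nonpos_of_nonneg
    (mul_nonpos_of_nonneg_of_nonpos (mul_nonneg (by norm_num) h₁) h₂) h₃

theorem lineSide_circlePoint_nonneg {α β φ : ℝ} (hαβ : α ≤ β) (hβφ : β ≤ φ)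
    (hφα : φ ≤ α + 2 * π) : 0 ≤ lineSide (circlePoint α) (circlePoint β) (circlePoint φ) := by
  rw [lineSide_circlePoint]
  have h₁ : 0 ≤ sin ((β - α) / 2) := sin_nonneg_of_nonneg_of_le_pi (by linarith) (by linarith)
  have h₂ : 0 ≤ sin ((φ - β) / 2) := sin_nonneg_of_nonneg_of_le_pi (by linarith) (by linarith)
  have h₃ : 0 ≤ sin ((φ - α) / 2) := sin_nonneg_of_nonneg_of_le_pi (by linarith) (by linarith)
  positivity

theorem lineSide_circlePoint_pos {α β φ : ℝ} (hαβ : α < β) (hβφ : β < φ)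
    (hφα : φ < α + 2 * π) : 0 < lineSide (circlePoint α) (circlePoint β) (circlePoint φ) := by
  rw [lineSide_circlePoint]
  have h₁ : 0 < sin ((β - α) / 2) := sin_pos_of_pos_of_lt_pi (by linarith) (by linarith)
  have h₂ : 0 < sin ((φ - β) / 2) := sin_pos_of_pos_of_lt_pi (by linarith) (by linarith)
  have h₃ : 0 < sin ((φ - α) / 2) := sin_pos_of_pos_of_lt_pi (by linarith) (by linarith)
  positivity

/-- Let `y_a, y_b, y_c, y_d` be four points of the unit circle in counterclockwise
circular order (given by angles `θa < θb < θc < θd < θa + 2π`), and let `z` be the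
intersection point of the segments `[y_a, y_c]` and `[y_b, y_d]`. If a convex set `S`
contains points `q₁, q₂, q₃, q₄` of the circle lying respectively on the arcs
`[y_a, y_b]`, `[y_b, y_c]`, `[y_c, y_d]`, `[y_d, y_a]`, then `z ∈ S`. -/
theorem stmt_5 (θa θb θc θd φ₁ φ₂ φ₃ φ₄ : ℝ)
    (hab : θa < θb) (hbc : θb < θc) (hcd : θc < θd) (hda : θd < θa + 2 * Real.pi)
    (hφ₁ : φ₁ ∈ Set.Icc θa θb) (hφ₂ : φ₂ ∈ Set.Icc θb θc)
    (hφ₃ : φ₃ ∈ Set.Icc θc θd) (hφ₄ : φ₄ ∈ Set.Icc θd (θa + 2 * Real.pi))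
    (z : ℝ × ℝ)
    (hz₁ : z ∈ segment ℝ (Real.cos θa, Real.sin θa) (Real.cos θc, Real.sin θc))
    (hz₂ : z ∈ segment ℝ (Real.cos θb, Real.sin θb) (Real.cos θd, Real.sin θd))
    (S : Set (ℝ × ℝ)) (hS : Convex ℝ S)
    (hq₁ : (Real.cos φ₁, Real.sin φ₁) ∈ S) (hq₂ : (Real.cos φ₂, Real.sin φ₂) ∈ S)
    (hq₃ : (Real.cos φ₃, Real.sin φ₃) ∈ S) (hq₄ : (Real.cos φ₄, Real.sin φ₄) ∈ S) :
    z ∈ S := by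
  obtain ⟨hφ₁, hφ₁'⟩ := hφ₁
  obtain ⟨hφ₂, hφ₂'⟩ := hφ₂
  obtain ⟨hφ₃, hφ₃'⟩ := hφ₃
  obtain ⟨hφ₄, hφ₄'⟩ := hφ₄
  -- relative to the chord `y_b y_d`, `q₁` lies on the arc `[θd, θb + 2π]`
  have hg₁ : 0 ≤ lineSide (circlePoint θb) (circlePoint θd) (circlePoint φ₁) := by
    rw [← circlePoint_add_two_pi φ₁]
    exact lineSide_circlePoint_nonneg (by linarith) (by linarith) (by linarith)
  obtain ⟨w, hwS, hw_ac, hw_bd⟩ := hS.exists_mem_common_zero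
    (lineSide (circlePoint θa) (circlePoint θc)) (lineSide (circlePoint θb) (circlePoint θd))
    hq₁ hq₂ hq₃ hq₄
    (lineSide_circlePoint_nonpos (by linarith) (by linarith) (by linarith))
    (lineSide_circlePoint_nonpos (by linarith) (by linarith) (by linarith))
    (lineSide_circlePoint_nonneg (by linarith) (by linarith) (by linarith))
    (lineSide_circlePoint_nonneg (by linarith) (by linarith) (by linarith))
    hg₁
    (lineSide_circlePoint_nonpos (by linarith) (by linarith) (by linarith))
    (lineSide_circlePoint_nonpos (by linarith) (by linarith) (by linarith))
    (lineSide_circlePoint_nonneg (by linarith) (by linarith) (by linarith))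
  have hbd : lineSide (circlePoint θa) (circlePoint θc) (circlePoint θb)
      < lineSide (circlePoint θa) (circlePoint θc) (circlePoint θd) :=
    (lineSide_circlePoint_nonpos hab.le hbc.le (by linarith)).trans_lt
      (lineSide_circlePoint_pos (hab.trans hbc) hcd hda)
  have hwz := eq_of_lineSide_eq_zero hbd.ne hw_ac (lineSide_eq_zero_of_mem_segment hz₁)
    hw_bd (lineSide_eq_zero_of_mem_segment hz₂)
  exact hwz ▸ hwS
end

section
/- Let N be a positive integer, 0 < α < 1/8, and C ⊆ ℤ/Nℤ with the property that there do NOT exist four elements of C with pairwise circular distance at least αN. Then C is contained in the union of at most three circular intervals, each of length at most αN. -/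
/-- The circular distance between positions `a` and `b` of `ℤ/Nℤ`. -/
def circDist (N : ℕ) (a b : ZMod N) : ℕ := min (b - a).val (a - b).val

/-- The circular interval of `ℤ/Nℤ` with left endpoint `s` and right endpoint
`s + L` (so its "length", the distance between its endpoints, is `L`). -/
def circInterval (N : ℕ) (s : ZMod N) (L : ℕ) : Set (ZMod N) :=
  {x | ∃ k ≤ L, x = s + (k : ZMod N)}

/-- `C` is "spread out" at scale `δ`: there are four elements of `C` whose pairwise
circular distances are all at least `δ`. -/
def SpreadOut (N : ℕ) (C : Finset (ZMod N)) (δ : ℝ) : Prop :=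
  ∃ a ∈ C, ∃ b ∈ C, ∃ c ∈ C, ∃ d ∈ C,
    δ ≤ circDist N a b ∧ δ ≤ circDist N a c ∧ δ ≤ circDist N a d ∧
    δ ≤ circDist N b c ∧ δ ≤ circDist N b d ∧ δ ≤ circDist N c d

/-!
If some `x ∈ C` is preceded by an arc of more than `L` residues free of `C`, then measuring
positions from `x` places `C` inside the segment `[0, N - L)`, so going the long way round
between two points of `C` always takes more than `L` steps; there the greedy procedure either covers `C` by three intervals of length `L`
or produces four points, consecutive ones more than `L` apart, which are then pairwise more than
`L` apart on the circle. Otherwise every gap of `C` is at most `L`, so every window of `L`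
consecutive residues meets `C`, and windows starting at `L + 1`, `3L + 1`, `5L + 1` (together
with `x`) give four such points as soon as `7L < N`. Finally take `L = ⌊αN⌋`.
-/

theorem Finset.exists_intervals_cover_or_chain (L k : ℕ) (S : Finset ℕ) :
    (∃ a : Fin k → ℕ, ∀ s ∈ S, ∃ i, a i ≤ s ∧ s ≤ a i + L) ∨
    ∃ x : Fin (k + 1) → ℕ, (∀ i, x i ∈ S) ∧ ∀ i : Fin k, x i.castSucc + L < x i.succ := by
  induction k generalizing S with
  | zero =>
    rcases S.eq_empty_or_nonempty with rfl | ⟨s, hs⟩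
    · exact Or.inl ⟨Fin.elim0, by simp⟩
    · exact Or.inr ⟨fun _ => s, fun _ => hs, Fin.elim0⟩
  | succ k ih =>
    rcases S.eq_empty_or_nonempty with rfl | hS
    · exact Or.inl ⟨fun _ => 0, by simp⟩
    set m := S.min' hS
    rcases ih (S.filter (m + L < ·)) with ⟨a, ha⟩ | ⟨x, hxS, hx⟩
    · refine Or.inl ⟨Fin.cons m a, fun s hs => ?_⟩
      by_cases hsm : s ≤ m + L
      · exact ⟨0, S.min'_le s hs, hsm⟩
      · obtain ⟨i, hi⟩ := ha s (Finset.mem_filter.mpr ⟨hs, by omega⟩)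
        exact ⟨i.succ, by simpa using hi⟩
    · have hxS' : ∀ i, x i ∈ S ∧ m + L < x i := fun i => Finset.mem_filter.mp (hxS i)
      refine Or.inr ⟨Fin.cons m x, Fin.cases (S.min'_mem hS) fun i => (hxS' i).1, ?_⟩
      intro i
      cases i using Fin.cases with
      | zero => simpa using (hxS' 0).2
      | succ i => simpa [← Fin.succ_castSucc] using hx i

namespace ZMod

variable {N : ℕ} [NeZero N]

theorem val_sub_add_val_sub {a b : ZMod N} (h : a ≠ b) : (a - b).val + (b - a).val = N := by
  have hba : b - a ≠ 0 := sub_ne_zero.mpr h.symm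
  rw [← neg_sub, neg_val, if_neg hba]
  have := (b - a).val_lt
  omega

end ZMod

theorem SpreadOut.mono {N : ℕ} {C : Finset (ZMod N)} {δ δ' : ℝ} (h : δ' ≤ δ)
    (hC : SpreadOut N C δ) : SpreadOut N C δ' := by
  obtain ⟨a, ha, b, hb, c, hc, d, hd, h1, h2, h3, h4, h5, h6⟩ := hC
  exact ⟨a, ha, b, hb, c, hc, d, hd, by linarith, by linarith, by linarith, by linarith,
    by linarith, by linarith⟩

section Circle

variable {N : ℕ} [NeZero N]

theorem mem_circInterval_of_val_sub {x y : ZMod N} {u L : ℕ} (hu : u ≤ (y - x).val)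
    (hL : (y - x).val ≤ u + L) : y ∈ circInterval N (x + u) L := by
  refine ⟨(y - x).val - u, by omega, ?_⟩
  rw [add_assoc, ← Nat.cast_add, Nat.add_sub_cancel' hu, ZMod.natCast_zmod_val]
  ring

theorem lt_circDist_of_val_sub {x y z : ZMod N} {L : ℕ}
    (hyz : (y - x).val + L < (z - x).val) (hzy : (z - x).val + L < N + (y - x).val) :
    L < circDist N y z := by
  have hsub : (z - y).val = (z - x).val - (y - x).val := by
    rw [← ZMod.val_sub (by omega)]
    ring_nf
  have hne : y ≠ z := fun h => by simp [h] at hyz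
  have hsum := ZMod.val_sub_add_val_sub hne
  unfold circDist
  omega

theorem spreadOut_of_val_sub_chain {C : Finset (ZMod N)} {L : ℕ} {x a b c d : ZMod N}
    (ha : a ∈ C) (hb : b ∈ C) (hc : c ∈ C) (hd : d ∈ C)
    (hab : (a - x).val + L < (b - x).val) (hbc : (b - x).val + L < (c - x).val)
    (hcd : (c - x).val + L < (d - x).val) (hda : (d - x).val + L < N + (a - x).val) :
    SpreadOut N C (L + 1) := by
  have key : ∀ {y z : ZMod N}, (y - x).val + L < (z - x).val →
      (z - x).val + L < N + (y - x).val → (L + 1 : ℝ) ≤ circDist N y z := fun h h' => by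
    exact_mod_cast lt_circDist_of_val_sub h h'
  exact ⟨a, ha, b, hb, c, hc, d, hd, key (by omega) (by omega), key (by omega) (by omega),
    key (by omega) (by omega), key (by omega) (by omega), key (by omega) (by omega),
    key (by omega) (by omega)⟩

theorem exists_mem_val_sub_lt_of_forall_gap_le {C : Finset (ZMod N)} {L : ℕ} (hC : C.Nonempty)
    (hgap : ∀ x ∈ C, ∃ y ∈ C, y ≠ x ∧ (x - y).val ≤ L) (m : ZMod N) :
    ∃ y ∈ C, (y - m).val < L := by
  obtain ⟨y, hy, hmin⟩ := C.exists_min_image (fun y => (y - m).val) hC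
  refine ⟨y, hy, Nat.lt_of_not_le fun hLy => ?_⟩
  obtain ⟨z, hz, hzy, hyz⟩ := hgap y hy
  have hpos : 0 < (y - z).val := ZMod.val_pos.mpr (sub_ne_zero.mpr hzy.symm)
  have hzm : (z - m).val = (y - m).val - (y - z).val := by
    rw [← ZMod.val_sub (by omega)]
    ring_nf
  have hmin_z := hmin z hz
  omega

theorem spreadOut_of_forall_gap_le {C : Finset (ZMod N)} {L : ℕ} (hN : 7 * L < N)
    (hC : C.Nonempty) (hgap : ∀ x ∈ C, ∃ y ∈ C, y ≠ x ∧ (x - y).val ≤ L) :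
    SpreadOut N C (L + 1) := by
  obtain ⟨x, hx⟩ := hC
  have window : ∀ u : ℕ, u + L ≤ N → ∃ y ∈ C, u ≤ (y - x).val ∧ (y - x).val < u + L := by
    intro u hu
    obtain ⟨y, hy, hyL⟩ := exists_mem_val_sub_lt_of_forall_gap_le ⟨x, hx⟩ hgap (x + u)
    have hu' : ((u : ZMod N)).val = u := ZMod.val_cast_of_lt (by omega)
    have hpos : (y - x).val = u + (y - (x + u)).val := by
      rw [show y - x = (u : ZMod N) + (y - (x + u)) by ring, ZMod.val_add_of_lt (by omega), hu']
    exact ⟨y, hy, by omega, by omega⟩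
  obtain ⟨b, hb, hb₁, hb₂⟩ := window (L + 1) (by omega)
  obtain ⟨c, hc, hc₁, hc₂⟩ := window (3 * L + 1) (by omega)
  obtain ⟨d, hd, hd₁, hd₂⟩ := window (5 * L + 1) (by omega)
  have h0 : (x - x).val = 0 := by simp
  exact spreadOut_of_val_sub_chain (x := x) hx hb hc hd (by omega) (by omega) (by omega) (by omega)

end Circle

theorem exists_circInterval_cover_of_not_spreadOut {N L : ℕ} [NeZero N] (hN : 7 * L < N)
    {C : Finset (ZMod N)} (hC : ¬ SpreadOut N C (L + 1)) :
    ∃ s₁ s₂ s₃ : ZMod N,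
      ↑C ⊆ circInterval N s₁ L ∪ circInterval N s₂ L ∪ circInterval N s₃ L := by
  rcases C.eq_empty_or_nonempty with rfl | hne
  · exact ⟨0, 0, 0, by simp⟩
  by_cases hdense : ∀ x ∈ C, ∃ y ∈ C, y ≠ x ∧ (x - y).val ≤ L
  · exact absurd (spreadOut_of_forall_gap_le hN hne hdense) hC
  push Not at hdense
  obtain ⟨x, hx, hgap⟩ := hdense
  have hpos : ∀ y ∈ C, (y - x).val + L < N := by
    intro y hy
    by_cases hyx : y = x
    · simp only [hyx, sub_self, ZMod.val_zero]
      omega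
    · have hsum := ZMod.val_sub_add_val_sub hyx
      have hfar := hgap y hy hyx
      omega
  rcases Finset.exists_intervals_cover_or_chain L 3 (C.image fun y => (y - x).val) with
    ⟨a, ha⟩ | ⟨q, hqS, hq⟩
  · refine ⟨x + a 0, x + a 1, x + a 2, fun y hy => ?_⟩
    obtain ⟨i, hi⟩ := ha _ (Finset.mem_image_of_mem _ hy)
    have hyi := mem_circInterval_of_val_sub hi.1 hi.2
    fin_cases i <;> simp_all
  · choose y hyC hyq using fun i => Finset.mem_image.mp (hqS i)
    have hlast := hpos _ (hyC 3)
    have h01 : q 0 + L < q 1 := hq 0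
    have h12 : q 1 + L < q 2 := hq 1
    have h23 : q 2 + L < q 3 := hq 2
    rw [hyq] at hlast
    refine absurd (spreadOut_of_val_sub_chain (x := x) (hyC 0) (hyC 1) (hyC 2) (hyC 3)
      ?_ ?_ ?_ ?_) hC <;> simp only [hyq] <;> omega

/-- If there do not exist four elements of `C ⊆ ℤ/Nℤ` with pairwise circular
distances all at least `αN` (where `0 < α < 1/8`), then `C` is contained in the
union of at most three circular intervals, each of length at most `αN`. -/
theorem stmt_8 (N : ℕ) (hN : 0 < N) (α : ℝ) (hα0 : 0 < α) (hα : α < 1 / 8)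
    (C : Finset (ZMod N)) (hnot : ¬ SpreadOut N C (α * N)) :
    ∃ (s₁ s₂ s₃ : ZMod N) (L₁ L₂ L₃ : ℕ),
      (L₁ : ℝ) ≤ α * N ∧ (L₂ : ℝ) ≤ α * N ∧ (L₃ : ℝ) ≤ α * N ∧
      ↑C ⊆ circInterval N s₁ L₁ ∪ circInterval N s₂ L₂ ∪ circInterval N s₃ L₃ := by
  have : NeZero N := ⟨hN.ne'⟩
  set L := ⌊α * N⌋₊
  have hL : (L : ℝ) ≤ α * N := Nat.floor_le (by positivity)
  have hLN : 7 * L < N := by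
    have : (7 * L : ℝ) < N := by nlinarith [(Nat.cast_pos.mpr hN : (0 : ℝ) < N)]
    exact_mod_cast this
  have hC : ¬ SpreadOut N C (L + 1) := fun h =>
    hnot (h.mono (Nat.lt_floor_add_one _).le)
  obtain ⟨s₁, s₂, s₃, hcover⟩ := exists_circInterval_cover_of_not_spreadOut hLN hC
  exact ⟨s₁, s₂, s₃, L, L, L, hL, hL, hL, hcover⟩
end

section
/- Let P ⊆ ℝᵈ be a finite point set realizing a lower bound L(ε) for the size of weak ε-nets (i.e., every weak ε-net for P has size at least L(ε)). Let S be the family of convex hulls of all subsets of P of size at least ε|P|. Then S satisfies the (p, d+1)-condition with p = ⌈1 + d/ε⌉, and every transversal of S has size at least L(ε). -/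
/-!
If `p > d/ε` subsets of `P` each contain at least `ε|P|` points, their total size exceeds
`d|P|`, so by double counting some point of `P` lies in `d + 1` of them, and it is a common
point of the corresponding convex hulls. Conversely, a convex set `C` containing `ε|P|`
points of `P` contains the hull of those points, so a transversal of the hulls is a weak
`ε`-net for `P`.
-/

open scoped Classical

open Finset

theorem Finset.sum_card_eq_sum_card_filter_mem {ι α : Type*} [Fintype ι] {P : Finset α}
    {A : ι → Finset α} (hA : ∀ i, A i ⊆ P) :
    ∑ i, #(A i) = ∑ x ∈ P, #{i | x ∈ A i} := by
  have hcard : ∀ i, #(A i) = #{x ∈ P | x ∈ A i} := fun i ↦ by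
    rw [filter_mem_eq_inter, inter_eq_right.mpr (hA i)]
  simp only [hcard, card_filter]
  exact sum_comm

theorem Finset.exists_lt_card_filter_mem_of_card_mul_lt_sum_card {ι α : Type*} [Fintype ι]
    {P : Finset α} {A : ι → Finset α} {d : ℕ} (hA : ∀ i, A i ⊆ P)
    (h : #P * d < ∑ i, #(A i)) : ∃ x ∈ P, d < #{i | x ∈ A i} := by
  rw [sum_card_eq_sum_card_filter_mem hA] at h
  by_contra! hle
  exact h.not_ge (sum_le_card_nsmul P _ d hle)

theorem lt_ceil_one_add_div_mul {d ε : ℝ} (hε : 0 < ε) : d < ⌈1 + d / ε⌉₊ * ε :=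
  calc d < (1 + d / ε) * ε := by field_simp; linarith
    _ ≤ ⌈1 + d / ε⌉₊ * ε := by gcongr; exact Nat.le_ceil _

theorem card_mul_lt_sum_card_of_ceil_le {ι α : Type*} [Fintype ι] {P : Finset α}
    {A : ι → Finset α} {d : ℕ} {ε : ℝ} (hε : 0 < ε) (hP : P.Nonempty)
    (hι : Fintype.card ι = ⌈1 + (d : ℝ) / ε⌉₊) (hA : ∀ i, ε * #P ≤ #(A i)) :
    #P * d < ∑ i, #(A i) := by
  have hPpos : (0 : ℝ) < #P := by exact_mod_cast hP.card_pos
  have hsum : (Fintype.card ι : ℝ) * (ε * #P) ≤ ∑ i, (#(A i) : ℝ) := by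
    simpa using sum_le_sum fun i (_ : i ∈ univ) ↦ hA i
  have hp := lt_ceil_one_add_div_mul (d := d) hε
  rw [hι] at hsum
  exact_mod_cast (by nlinarith : (#P : ℝ) * d < ∑ i, (#(A i) : ℝ))

theorem exists_card_eq_biInter_convexHull_nonempty {ι E : Type*} [Fintype ι] [AddCommGroup E]
    [Module ℝ E] {P : Finset E} {A : ι → Finset E} {d : ℕ} (hAP : ∀ i, A i ⊆ P)
    (h : #P * d < ∑ i, #(A i)) :
    ∃ I : Finset ι, #I = d + 1 ∧ (⋂ i ∈ I, convexHull ℝ (A i : Set E)).Nonempty := by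
  obtain ⟨x, -, hx⟩ := exists_lt_card_filter_mem_of_card_mul_lt_sum_card hAP h
  obtain ⟨I, hI, hIcard⟩ := exists_subset_card_eq (Nat.succ_le_of_lt hx)
  refine ⟨I, hIcard, x, Set.mem_iInter₂.mpr fun i hi ↦ subset_convexHull ℝ _ ?_⟩
  exact (mem_filter.mp (hI hi)).2

theorem convexHull_filter_mem_subset {E : Type*} [AddCommGroup E] [Module ℝ E] (P : Finset E)
    {C : Set E} (hC : Convex ℝ C) : convexHull ℝ (↑(P.filter fun x ↦ x ∈ C) : Set E) ⊆ C :=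
  convexHull_min (fun _ hx ↦ (mem_filter.mp hx).2) hC

theorem inter_nonempty_of_forall_convexHull_inter_nonempty {E : Type*} [AddCommGroup E]
    [Module ℝ E] {P M : Finset E} {ε : ℝ}
    (hM : ∀ A : Finset E, A ⊆ P → ε * #P ≤ #A → (convexHull ℝ (A : Set E) ∩ M).Nonempty)
    {C : Set E} (hC : Convex ℝ C) (hεC : ε * #P ≤ #(P.filter fun x ↦ x ∈ C)) :
    (C ∩ M).Nonempty :=
  (hM _ (filter_subset _ P) hεC).mono
    (Set.inter_subset_inter_left _ (convexHull_filter_mem_subset P hC))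

theorem stmt_15_general {d : ℕ} (P : Finset (EuclideanSpace ℝ (Fin d)))
    (hP : P.Nonempty) (ε : ℝ) (hε0 : 0 < ε) (L : ℝ)
    (hlow : ∀ M : Finset (EuclideanSpace ℝ (Fin d)),
      (∀ C : Set (EuclideanSpace ℝ (Fin d)), Convex ℝ C →
        ε * (P.card : ℝ) ≤ ((P.filter (fun x => x ∈ C)).card : ℝ) → (C ∩ ↑M).Nonempty) →
      L ≤ (M.card : ℝ)) :
    (∀ f : Fin ⌈1 + (d : ℝ) / ε⌉₊ → Set (EuclideanSpace ℝ (Fin d)),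
      (∀ i, ∃ A : Finset (EuclideanSpace ℝ (Fin d)), A ⊆ P ∧
          ε * (P.card : ℝ) ≤ (A.card : ℝ) ∧ f i = convexHull ℝ ↑A) →
      ∃ I : Finset (Fin ⌈1 + (d : ℝ) / ε⌉₊), I.card = d + 1 ∧ (⋂ i ∈ I, f i).Nonempty) ∧
    (∀ M : Finset (EuclideanSpace ℝ (Fin d)),
      (∀ A : Finset (EuclideanSpace ℝ (Fin d)), A ⊆ P →
        ε * (P.card : ℝ) ≤ (A.card : ℝ) → ((convexHull ℝ (↑A : Set (EuclideanSpace ℝ (Fin d)))) ∩ ↑M).Nonempty) →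
      L ≤ (M.card : ℝ)) := by
  refine ⟨fun f hf ↦ ?_, fun M hM ↦ hlow M fun C hC ↦
    inter_nonempty_of_forall_convexHull_inter_nonempty hM hC⟩
  choose A hAP hAcard hAf using hf
  have hsum := card_mul_lt_sum_card_of_ceil_le hε0 hP (Fintype.card_fin _) hAcard
  simpa only [hAf] using exists_card_eq_biInter_convexHull_nonempty hAP hsum

/-- Lower-bound construction: let `P ⊆ ℝᵈ` be a finite point set for which every weak
`ε`-net has size at least `L`, and let `𝒮` be the family of convex hulls of all
subsets of `P` of size at least `ε|P|`. Then `𝒮` satisfies the `(p, d+1)`-condition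
with `p = ⌈1 + d/ε⌉`, and every transversal of `𝒮` has size at least `L`. -/
theorem stmt_15 {d : ℕ} (hd : 1 ≤ d) (P : Finset (EuclideanSpace ℝ (Fin d)))
    (hP : P.Nonempty) (ε : ℝ) (hε0 : 0 < ε) (hε1 : ε ≤ 1) (L : ℝ)
    (hlow : ∀ M : Finset (EuclideanSpace ℝ (Fin d)),
      (∀ C : Set (EuclideanSpace ℝ (Fin d)), Convex ℝ C →
        ε * (P.card : ℝ) ≤ ((P.filter (fun x => x ∈ C)).card : ℝ) → (C ∩ ↑M).Nonempty) →
      L ≤ (M.card : ℝ)) :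
    (∀ f : Fin ⌈1 + (d : ℝ) / ε⌉₊ → Set (EuclideanSpace ℝ (Fin d)),
      (∀ i, ∃ A : Finset (EuclideanSpace ℝ (Fin d)), A ⊆ P ∧
          ε * (P.card : ℝ) ≤ (A.card : ℝ) ∧ f i = convexHull ℝ ↑A) →
      ∃ I : Finset (Fin ⌈1 + (d : ℝ) / ε⌉₊), I.card = d + 1 ∧ (⋂ i ∈ I, f i).Nonempty) ∧
    (∀ M : Finset (EuclideanSpace ℝ (Fin d)),
      (∀ A : Finset (EuclideanSpace ℝ (Fin d)), A ⊆ P →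
        ε * (P.card : ℝ) ≤ (A.card : ℝ) → ((convexHull ℝ (↑A : Set (EuclideanSpace ℝ (Fin d)))) ∩ ↑M).Nonempty) →
      L ≤ (M.card : ℝ)) :=
  stmt_15_general P hP ε hε0 L hlow
end
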